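/- Let n ≥ 1, let d_1 ≤ ... ≤ d_k be positive integers with d_1 + ... + d_k = n(n+1)/2, and let G be the reduced bipartite graph with degree sequence (d_1,...,d_k). If G admits a star-forest ascending subgraph decomposition with the centers of the stars in X, then there exists an ascending matrix A ∈ N((d_1,...,d_k), (1,2,...,n)) such that the coloring data encoded by A admits a sequential coloring for X, i.e., there are finite sets S_{ij} ⊆ {1,2,3,...} with |S_{ij}| = a_{ij} for all 1 ≤ i ≤ k and 1 ≤ j ≤ n, such that for each fixed j the sets S_{1j},...,S_{kj} are pairwise disjoint, and for each fixed i the sets S_{i1},...,S_{in} are pairwise disjoint with union exactly {1,...,d_i}. -/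

import Mathlib

/-!
Take `A i j` to be the degree of `x i` in `F j`, and `S i j` the (1-based) indices of its
neighbours there: since the `F j` partition the edges and are star forests with centres in `X`,
this is a sequential colouring. For `A_j ⪯ A_{j+1}` it suffices to compare, for every `t`, the
numbers of centres of degree at least `t` in `F j` and in `F (j+1)`. A copy of `F j` in `F (j+1)`
gives an injection between these sets: the star at `x` contains a vertex sent to a centre of
degree at least `deg x` (`x` itself, unless `x` is sent to a leaf, in which case `deg x = 1` and
the leaf of `x` is sent to a centre), and distinct stars are disjoint.
-/

open Finset

/-- The degree in the bipartite edge set `E` of a vertex `x` of the part `X = Fin k`. -/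
def Xdeg {k m : ℕ} (E : Finset (Fin k × Fin m)) (x : Fin k) : ℕ :=
  (E.filter fun e => e.1 = x).card

/-- The degree in the bipartite edge set `E` of a vertex `y` of the part `Y = Fin m`. -/
def Ydeg {k m : ℕ} (E : Finset (Fin k × Fin m)) (y : Fin m) : ℕ :=
  (E.filter fun e => e.2 = y).card

/-- A star forest with centers in `X`: every vertex of `Y` has degree at most one. -/
def IsStarForest {k m : ℕ} (F : Finset (Fin k × Fin m)) : Prop :=
  ∀ y : Fin m, Ydeg F y ≤ 1

/-- The simple graph on the vertex set `Fin k ⊕ Fin m` determined by a set of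
bipartite edges. -/
def toGraph {k m : ℕ} (F : Finset (Fin k × Fin m)) : SimpleGraph (Fin k ⊕ Fin m) where
  Adj u v := (∃ x y, u = Sum.inl x ∧ v = Sum.inr y ∧ (x, y) ∈ F) ∨
             (∃ x y, v = Sum.inl x ∧ u = Sum.inr y ∧ (x, y) ∈ F)
  symm := ⟨fun _ _ h => Or.symm h⟩
  loopless := by
    constructor
    rintro u (⟨x, y, rfl, h, -⟩ | ⟨x, y, rfl, h, -⟩) <;> exact Sum.inl_ne_inr h

/-- `F` is isomorphic to a subgraph of `F'`: there is an injective map of vertices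
carrying edges to edges. -/
def IsoToSubgraph {k m k' m' : ℕ} (F : Finset (Fin k × Fin m))
    (F' : Finset (Fin k' × Fin m')) : Prop :=
  ∃ f : Fin k ⊕ Fin m → Fin k' ⊕ Fin m',
    Function.Injective f ∧ ∀ u v, (toGraph F).Adj u v → (toGraph F').Adj (f u) (f v)

/-- `c ⪯ c'` : after reordering the components of each vector in nondecreasing order,
each component of `c` is at most the corresponding component of `c'`. -/
def Prec {k : ℕ} (c c' : Fin k → ℕ) : Prop :=
  ∀ i : Fin k, c (Tuple.sort c i) ≤ c' (Tuple.sort c' i)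

/-- A star-forest ascending subgraph decomposition of the edge set `E`:
the `F i` partition `E`, `F i` has `i + 1` edges (`1`-based: `i` edges),
every `F i` is a star forest with centers in `X`, and each `F i` is isomorphic
to a subgraph of the next one. -/
def StarForestASD {k m n : ℕ} (E : Finset (Fin k × Fin m))
    (F : Fin n → Finset (Fin k × Fin m)) : Prop :=
  (∀ i j, i ≠ j → Disjoint (F i) (F j)) ∧
  Finset.univ.biUnion F = E ∧
  (∀ i, (F i).card = (i : ℕ) + 1) ∧
  (∀ i, IsStarForest (F i)) ∧
  ∀ j : ℕ, (h : j + 1 < n) → IsoToSubgraph (F ⟨j, Nat.lt_of_succ_lt h⟩) (F ⟨j + 1, h⟩)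

/-- The reduced bipartite graph with (1-based) degree sequence `d 1 ≤ ⋯ ≤ d k`:
`x i` is adjacent exactly to `y 1, …, y (d i)`. -/
def reducedEdges (k : ℕ) (d : ℕ → ℕ) : Finset (Fin k × Fin (d k)) :=
  Finset.univ.filter fun e => (e.2 : ℕ) + 1 ≤ d ((e.1 : ℕ) + 1)

/-- The columns of `A` satisfy `A_1 ⪯ A_2 ⪯ ⋯ ⪯ A_n`. -/
def AscendingCols {k n : ℕ} (A : Matrix (Fin k) (Fin n) ℕ) : Prop :=
  ∀ j : ℕ, (h : j + 1 < n) →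
    Prec (fun i => A i ⟨j, Nat.lt_of_succ_lt h⟩) (fun i => A i ⟨j + 1, h⟩)

/-- A sequential coloring of the bipartite multigraph encoded by the matrix `A`:
the parallel edge class joining `x i` and `z j` receives the set `S i j` of colors,
the coloring is proper, and the edges at `x i` receive exactly colors `{1, …, d i}`. -/
def SeqColoring {k n : ℕ} (A : Matrix (Fin k) (Fin n) ℕ) (d : Fin k → ℕ)
    (S : Fin k → Fin n → Finset ℕ) : Prop :=
  (∀ i j, (S i j).card = A i j) ∧
  (∀ j : Fin n, ∀ i i' : Fin k, i ≠ i' → Disjoint (S i j) (S i' j)) ∧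
  (∀ i : Fin k, ∀ j j' : Fin n, j ≠ j' → Disjoint (S i j) (S i j')) ∧
  (∀ i : Fin k, Finset.univ.biUnion (fun j => S i j) = Finset.Icc 1 (d i))

open scoped SimpleGraph

section StarForest

variable {k m k' m' : ℕ}

@[simp]
lemma toGraph_adj_inl_inr {F : Finset (Fin k × Fin m)} {x : Fin k} {y : Fin m} :
    (toGraph F).Adj (.inl x) (.inr y) ↔ (x, y) ∈ F := by
  simp [toGraph]

@[simp]
lemma toGraph_adj_inr_inl {F : Finset (Fin k × Fin m)} {x : Fin k} {y : Fin m} :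
    (toGraph F).Adj (.inr y) (.inl x) ↔ (x, y) ∈ F := by
  simp [toGraph]

@[simp]
lemma not_toGraph_adj_inl_inl {F : Finset (Fin k × Fin m)} {x x' : Fin k} :
    ¬(toGraph F).Adj (.inl x) (.inl x') := by
  simp [toGraph]

@[simp]
lemma not_toGraph_adj_inr_inr {F : Finset (Fin k × Fin m)} {y y' : Fin m} :
    ¬(toGraph F).Adj (.inr y) (.inr y') := by
  simp [toGraph]

lemma IsoToSubgraph.isContained {F : Finset (Fin k × Fin m)} {F' : Finset (Fin k' × Fin m')}
    (h : IsoToSubgraph F F') : toGraph F ⊑ toGraph F' := by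
  obtain ⟨f, hinj, hadj⟩ := h
  exact ⟨⟨⟨f, hadj _ _⟩, hinj⟩⟩

def nbrs (F : Finset (Fin k × Fin m)) (x : Fin k) : Finset (Fin m) :=
  univ.filter fun y => (x, y) ∈ F

@[simp]
lemma mem_nbrs {F : Finset (Fin k × Fin m)} {x : Fin k} {y : Fin m} :
    y ∈ nbrs F x ↔ (x, y) ∈ F := by
  simp [nbrs]

lemma Xdeg_eq_card_nbrs (F : Finset (Fin k × Fin m)) (x : Fin k) :
    Xdeg F x = #(nbrs F x) := by
  have : F.filter (fun e => e.1 = x) = (nbrs F x).map (Function.Embedding.sectR x _) := by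
    ext ⟨a, b⟩
    simp only [mem_filter, mem_map, mem_nbrs, Function.Embedding.sectR_apply, Prod.mk.injEq]
    grind
  rw [Xdeg, this, card_map]

lemma degree_toGraph_inl (F : Finset (Fin k × Fin m)) (x : Fin k)
    [Fintype ((toGraph F).neighborSet (.inl x))] : (toGraph F).degree (.inl x) = Xdeg F x := by
  have : (toGraph F).neighborFinset (.inl x) = (nbrs F x).map .inr := by
    ext (v | v) <;> simp
  rw [SimpleGraph.degree, this, card_map, Xdeg_eq_card_nbrs]

lemma Ydeg_eq_card_filter (F : Finset (Fin k × Fin m)) (y : Fin m) :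
    Ydeg F y = #(univ.filter fun x => (x, y) ∈ F) := by
  have : F.filter (fun e => e.2 = y) =
      (univ.filter fun x => (x, y) ∈ F).map (Function.Embedding.sectL _ y) := by
    ext ⟨a, b⟩
    simp only [mem_filter, mem_map, mem_univ, true_and, Function.Embedding.sectL_apply,
      Prod.mk.injEq]
    grind
  rw [Ydeg, this, card_map]

lemma degree_toGraph_inr (F : Finset (Fin k × Fin m)) (y : Fin m)
    [Fintype ((toGraph F).neighborSet (.inr y))] : (toGraph F).degree (.inr y) = Ydeg F y := by
  have : (toGraph F).neighborFinset (.inr y) = (univ.filter fun x => (x, y) ∈ F).map .inl := by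
    ext (v | v) <;> simp
  rw [SimpleGraph.degree, this, card_map, Ydeg_eq_card_filter]

lemma IsStarForest.eq_of_mem {F : Finset (Fin k × Fin m)} (hF : IsStarForest F)
    {x x' : Fin k} {y : Fin m} (h : (x, y) ∈ F) (h' : (x', y) ∈ F) : x = x' := by
  by_contra hne
  have : 1 < Ydeg F y :=
    one_lt_card.2 ⟨(x, y), by simp [h], (x', y), by simp [h'], by simp [hne]⟩
  exact (hF y).not_gt this

lemma IsStarForest.eq_of_closedNbhd {F : Finset (Fin k × Fin m)} (hF : IsStarForest F)
    {x x' : Fin k} {w : Fin k ⊕ Fin m}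
    (h : w = .inl x ∨ (toGraph F).Adj (.inl x) w)
    (h' : w = .inl x' ∨ (toGraph F).Adj (.inl x') w) : x = x' := by
  rcases w with w | y
  · simp_all
  · simp only [reduceCtorEq, false_or, toGraph_adj_inl_inr] at h h'
    exact hF.eq_of_mem h h'

open Classical in
lemma Xdeg_le_degree_map {F : Finset (Fin k × Fin m)} {F' : Finset (Fin k' × Fin m')}
    (φ : SimpleGraph.Copy (toGraph F) (toGraph F')) (x : Fin k) :
    Xdeg F x ≤ (toGraph F').degree (φ (.inl x)) :=
  degree_toGraph_inl F x ▸ φ.degree_le _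

lemma exists_closedNbhd_map_eq_inl {F : Finset (Fin k × Fin m)} {F' : Finset (Fin k' × Fin m')}
    (hF' : IsStarForest F') (φ : SimpleGraph.Copy (toGraph F) (toGraph F')) {x : Fin k}
    (hx : 0 < Xdeg F x) : ∃ w a, (w = .inl x ∨ (toGraph F).Adj (.inl x) w) ∧
      φ w = .inl a ∧ Xdeg F x ≤ Xdeg F' a := by
  classical
  have hdeg := Xdeg_le_degree_map φ x
  rcases hφx : φ (.inl x) with a | y'
  · rw [hφx, degree_toGraph_inl] at hdeg
    exact ⟨_, a, .inl rfl, hφx, hdeg⟩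
  · -- `x` lands on a leaf of `F'`, so `x` has degree 1 and its leaf lands on a centre.
    rw [hφx, degree_toGraph_inr] at hdeg
    obtain ⟨y, hy⟩ := card_pos.1 (Xdeg_eq_card_nbrs F x ▸ hx)
    have hadj := φ.toHom.map_adj (toGraph_adj_inl_inr.2 (mem_nbrs.1 hy))
    simp only [SimpleGraph.Copy.toHom_apply, hφx] at hadj
    rcases hφy : φ (.inr y) with a | y''
    · rw [hφy, toGraph_adj_inr_inl] at hadj
      refine ⟨_, a, .inr (toGraph_adj_inl_inr.2 (mem_nbrs.1 hy)), hφy, ?_⟩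
      have : 0 < Xdeg F' a := Xdeg_eq_card_nbrs F' a ▸ card_pos.2 ⟨y', mem_nbrs.2 hadj⟩
      have := hF' y'
      omega
    · simp [hφy] at hadj

lemma card_filter_le_Xdeg_le_of_isContained {F : Finset (Fin k × Fin m)}
    {F' : Finset (Fin k × Fin m')} (hF : IsStarForest F) (hF' : IsStarForest F')
    (hFF' : toGraph F ⊑ toGraph F') (t : ℕ) :
    #{x | t ≤ Xdeg F x} ≤ #{x | t ≤ Xdeg F' x} := by
  obtain ⟨φ⟩ := hFF'
  rcases Nat.eq_zero_or_pos t with rfl | ht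
  · simp
  have hmem (x) : x ∈ ({x | t ≤ Xdeg F x} : Finset _) ↔ t ≤ Xdeg F x := by simp
  choose w a hw hφw hdeg using fun x (hx : x ∈ ({x | t ≤ Xdeg F x} : Finset _)) =>
    exists_closedNbhd_map_eq_inl hF' φ (ht.trans_le ((hmem x).1 hx))
  have hmaps (x hx) : a x hx ∈ ({x | t ≤ Xdeg F' x} : Finset _) := by
    simpa using ((hmem x).1 hx).trans (hdeg x hx)
  refine card_le_card_of_injective (f := fun x => ⟨a x x.2, hmaps x x.2⟩)
    fun x₁ x₂ ha => Subtype.ext ?_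
  have : w x₁ x₁.2 = w x₂ x₂.2 := φ.injective (by simpa [hφw] using ha)
  exact hF.eq_of_closedNbhd (hw x₁ x₁.2) (this ▸ hw x₂ x₂.2)

end StarForest

lemma prec_of_forall_card_le {k : ℕ} {c c' : Fin k → ℕ}
    (h : ∀ t, #{i | t ≤ c i} ≤ #{i | t ≤ c' i}) : Prec c c' := by
  intro i
  by_contra! hlt
  set t := c (Tuple.sort c i)
  have hsort (v : Fin k → ℕ) : #{r | t ≤ v (Tuple.sort v r)} = #{r | t ≤ v r} :=
    card_equiv (Tuple.sort v) (by simp)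
  have hc : #(Ici i) ≤ #{r | t ≤ c (Tuple.sort c r)} :=
    card_le_card fun r hr => by simpa using Tuple.monotone_sort c (mem_Ici.1 hr)
  have hc' : #{r | t ≤ c' (Tuple.sort c' r)} ≤ #(Ioi i) := by
    refine card_le_card fun r hr => mem_Ioi.2 (lt_of_not_ge fun hri => ?_)
    exact hlt.not_ge (((mem_filter.1 hr).2).trans (Tuple.monotone_sort c' hri))
  rw [Fin.card_Ici, hsort] at hc
  rw [Fin.card_Ioi, hsort] at hc'
  have := h t
  omega

section Labels

variable {k m : ℕ}

lemma sum_Xdeg (F : Finset (Fin k × Fin m)) : ∑ x, Xdeg F x = #F :=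
  (card_eq_sum_card_fiberwise fun e _ => mem_univ e.1).symm

def nbrLabels (F : Finset (Fin k × Fin m)) (x : Fin k) : Finset ℕ :=
  (nbrs F x).map (Fin.valEmbedding.trans (addRightEmbedding 1))

lemma card_nbrLabels (F : Finset (Fin k × Fin m)) (x : Fin k) : #(nbrLabels F x) = Xdeg F x := by
  rw [nbrLabels, card_map, Xdeg_eq_card_nbrs]

lemma IsStarForest.disjoint_nbrLabels {F : Finset (Fin k × Fin m)} (hF : IsStarForest F)
    {x x' : Fin k} (hne : x ≠ x') : Disjoint (nbrLabels F x) (nbrLabels F x') := by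
  rw [nbrLabels, nbrLabels, disjoint_map, disjoint_left]
  exact fun _ hy hy' => hne (hF.eq_of_mem (mem_nbrs.1 hy) (mem_nbrs.1 hy'))

lemma disjoint_nbrLabels_of_disjoint {F F' : Finset (Fin k × Fin m)} (h : Disjoint F F')
    (x : Fin k) : Disjoint (nbrLabels F x) (nbrLabels F' x) := by
  rw [nbrLabels, nbrLabels, disjoint_map, disjoint_left]
  exact fun _ hy hy' => disjoint_left.1 h (mem_nbrs.1 hy) (mem_nbrs.1 hy')

lemma nbrLabels_biUnion {ι : Type*} (s : Finset ι) (F : ι → Finset (Fin k × Fin m))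
    (x : Fin k) :
    nbrLabels (s.biUnion F) x = s.biUnion fun j => nbrLabels (F j) x := by
  ext c
  simp only [nbrLabels, mem_map, mem_biUnion, mem_nbrs]
  grind

end Labels

lemma nbrLabels_reducedEdges {k : ℕ} {d : ℕ → ℕ} (i : Fin k) (h : d (i + 1) ≤ d k) :
    nbrLabels (reducedEdges k d) i = Icc 1 (d (i + 1)) := by
  ext c
  simp only [nbrLabels, reducedEdges, mem_map, mem_nbrs, mem_filter, mem_univ, true_and,
    Function.Embedding.trans_apply, Fin.valEmbedding_apply, addRightEmbedding_apply, mem_Icc]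
  constructor
  · rintro ⟨y, hy, rfl⟩
    omega
  · rintro ⟨h1, h2⟩
    exact ⟨⟨c - 1, by omega⟩, by simp only; omega, by simp only; omega⟩

theorem statement3_general (n k : ℕ) (d : ℕ → ℕ)
    (hmono : ∀ i j, 1 ≤ i → i ≤ j → j ≤ k → d i ≤ d j)
    (hASD : ∃ F : Fin n → Finset (Fin k × Fin (d k)),
      StarForestASD (reducedEdges k d) F) :
    ∃ A : Matrix (Fin k) (Fin n) ℕ,
      (∀ i : Fin k, ∑ j, A i j = d ((i : ℕ) + 1)) ∧
      (∀ j : Fin n, ∑ i, A i j = (j : ℕ) + 1) ∧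
      AscendingCols A ∧
      ∃ S : Fin k → Fin n → Finset ℕ,
        SeqColoring A (fun i => d ((i : ℕ) + 1)) S := by
  obtain ⟨F, hdisj, hunion, hcard, hSF, hiso⟩ := hASD
  have hrows (i : Fin k) : univ.biUnion (fun j => nbrLabels (F j) i) = Icc 1 (d (i + 1)) := by
    rw [← nbrLabels_biUnion, hunion]
    exact nbrLabels_reducedEdges i (hmono _ _ (by omega) (by omega) le_rfl)
  refine ⟨.of fun i j => Xdeg (F j) i, fun i => ?_, fun j => (sum_Xdeg _).trans (hcard j),
    fun j hj => prec_of_forall_card_le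
      (card_filter_le_Xdeg_le_of_isContained (hSF _) (hSF _) (hiso j hj).isContained),
    fun i j => nbrLabels (F j) i, fun i j => card_nbrLabels _ _,
    fun j _ _ => (hSF j).disjoint_nbrLabels,
    fun i j j' hjj' => disjoint_nbrLabels_of_disjoint (hdisj j j' hjj') i, hrows⟩
  simp only [Matrix.of_apply, ← card_nbrLabels]
  rw [← card_biUnion fun j _ j' _ hjj' => disjoint_nbrLabels_of_disjoint (hdisj j j' hjj') i,
    hrows, Nat.card_Icc, Nat.add_sub_cancel]

/-- **Proposition (only-if direction).** If the reduced bipartite graph with degree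
sequence `d 1 ≤ ⋯ ≤ d k` has a star-forest ASD with centers in `X`, then there is an
ascending matrix `A ∈ N(d, (1,…,n))` whose associated bipartite multigraph admits a
sequential coloring for `X`. -/
theorem statement3 (n k : ℕ) (hn : 1 ≤ n) (d : ℕ → ℕ)
    (hpos : ∀ i, 1 ≤ i → i ≤ k → 1 ≤ d i)
    (hmono : ∀ i j, 1 ≤ i → i ≤ j → j ≤ k → d i ≤ d j)
    (hsum : ∑ i ∈ Finset.Icc 1 k, d i = n * (n + 1) / 2)
    (hASD : ∃ F : Fin n → Finset (Fin k × Fin (d k)),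
      StarForestASD (reducedEdges k d) F) :
    ∃ A : Matrix (Fin k) (Fin n) ℕ,
      (∀ i : Fin k, ∑ j, A i j = d ((i : ℕ) + 1)) ∧
      (∀ j : Fin n, ∑ i, A i j = (j : ℕ) + 1) ∧
      AscendingCols A ∧
      ∃ S : Fin k → Fin n → Finset ℕ,
        SeqColoring A (fun i => d ((i : ℕ) + 1)) S :=
  statement3_general n k d hmono hASD
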